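/- arXiv:2404.11455 — 2 statements merged into one kernel-verified Lean document; each statement's English description precedes it below -/
import Mathlib

section
/- A function g ∈ 𝒞 is a fixed point of T (i.e. Tg = g) if and only if g is strictly decreasing, differentiable on [0,1], and there exists γ > 0 with −γ·g′(x) = g⁻¹(x) for all x ∈ [0,1], where g⁻¹ is the compositional inverse of g. In that case g is moreover convex and continuously differentiable, and γ = ∫₀¹ g = σ(g). -/
open Set MeasureTheory Filter intervalIntegral

noncomputable section

/-- The class ℰ of decreasing functions `f : [0,1] → [0,1]` with `f 0 = 1` and positive area. -/
def MemE (f : ℝ → ℝ) : Prop :=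
  (∀ x ∈ Icc (0:ℝ) 1, f x ∈ Icc (0:ℝ) 1) ∧
  AntitoneOn f (Icc 0 1) ∧ f 0 = 1 ∧ 0 < ∫ x in (0:ℝ)..1, f x

/-- Pseudo-inverse: `f* y = sup {x ∈ [0,1] | f x ≥ y}`. -/
def pseudoInv (f : ℝ → ℝ) (y : ℝ) : ℝ :=
  sSup {x | x ∈ Icc (0:ℝ) 1 ∧ y ≤ f x}

/-- The operator `T`: `(Tf)(x) = (∫ₓ¹ f*) / (∫₀¹ f)`. -/
def Tmap (f : ℝ → ℝ) : ℝ → ℝ :=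
  fun x => (∫ y in x..1, pseudoInv f y) / ∫ t in (0:ℝ)..1, f t

/-- The operator `I`: `(Ig)(x) = (∫ₓ¹ g) / (∫₀¹ g)`. -/
def Imap (g : ℝ → ℝ) : ℝ → ℝ :=
  fun x => (∫ t in x..1, g t) / ∫ t in (0:ℝ)..1, g t

/-- The class 𝒞: continuous members of ℰ vanishing at 1. -/
def MemC (f : ℝ → ℝ) : Prop := MemE f ∧ ContinuousOn f (Icc 0 1) ∧ f 1 = 0

/-- The class 𝒞̆: convex members of 𝒞. -/
def MemCconv (f : ℝ → ℝ) : Prop := MemC f ∧ ConvexOn ℝ (Icc 0 1) f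

/-- The class 𝒟: strictly decreasing members of 𝒞. -/
def MemD (f : ℝ → ℝ) : Prop := MemC f ∧ StrictAntiOn f (Icc 0 1)

/-- The class 𝒟̆ = 𝒟 ∩ 𝒞̆. -/
def MemDconv (f : ℝ → ℝ) : Prop := MemD f ∧ ConvexOn ℝ (Icc 0 1) f

/-- The stride `σ g = sup {α ≥ 0 | α - x ≤ α * g x for all x ∈ [0,1]}`. -/
def stride (g : ℝ → ℝ) : ℝ :=
  sSup {α : ℝ | 0 ≤ α ∧ ∀ x ∈ Icc (0:ℝ) 1, α - x ≤ α * g x}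

/-- The class 𝒦. -/
def MemK (g : ℝ → ℝ) : Prop :=
  MemCconv g ∧ 1/5 ≤ stride g ∧ 1/5 ≤ ∫ x in (0:ℝ)..1, g x

/-- `[c,d] ⊆ [0,ℓ]` is a sign switch of `Δ`. -/
def SignSwitch (Δ : ℝ → ℝ) (ℓ c d : ℝ) : Prop :=
  0 < c ∧ c ≤ d ∧ d < ℓ ∧ (∀ x ∈ Icc c d, Δ x = 0) ∧
  ∃ δ : ℝ, 0 < δ ∧ δ ≤ min c (ℓ - d) ∧
    ∀ x : ℝ, 0 < x → x ≤ δ → Δ (c - x) * Δ (d + x) < 0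

/-- `χΔ`: the number of sign switches of `Δ` on `[0,ℓ]`, in `ℕ∞`. -/
def nSwitch (Δ : ℝ → ℝ) (ℓ : ℝ) : ℕ∞ :=
  {p : ℝ × ℝ | SignSwitch Δ ℓ p.1 p.2}.encard

/-- The crossing number `χ(f,g) = sup {χ(f(a·) - b g) : a, b > 0}`. -/
def crossNum (f g : ℝ → ℝ) : ℕ∞ :=
  ⨆ a ∈ Set.Ioi (0:ℝ), ⨆ b ∈ Set.Ioi (0:ℝ),
    nSwitch (fun x => f (a * x) - b * g x) (min 1 (1/a))

/-- `Dominates f g` means `f` dominates `g`, written `g ◁ f`. -/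
def Dominates (f g : ℝ → ℝ) : Prop :=
  crossNum f g = 2 ∧ ∀ x ∈ Icc (0:ℝ) 1, g x ≤ f x


section Stmt4Aux

open Topology

variable {g : ℝ → ℝ}

lemma pseudoInv_mem_aux (hg : MemC g) {y : ℝ} (hy : y ∈ Icc (0:ℝ) 1) :
    pseudoInv g y ∈ {x | x ∈ Icc (0:ℝ) 1 ∧ y ≤ g x} := by
  have hne : ({x | x ∈ Icc (0:ℝ) 1 ∧ y ≤ g x}).Nonempty :=
    ⟨0, ⟨⟨le_refl 0, zero_le_one⟩, by rw [hg.1.2.2.1]; exact hy.2⟩⟩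
  have hbdd : BddAbove {x | x ∈ Icc (0:ℝ) 1 ∧ y ≤ g x} := ⟨1, fun x hx => hx.1.2⟩
  have hcl : IsClosed {x | x ∈ Icc (0:ℝ) 1 ∧ y ≤ g x} := by
    have h : {x | x ∈ Icc (0:ℝ) 1 ∧ y ≤ g x} = Icc 0 1 ∩ g ⁻¹' (Ici y) := by
      ext x; simp [mem_Ici]
    rw [h]
    exact hg.2.1.preimage_isClosed_of_isClosed isClosed_Icc isClosed_Ici
  exact hcl.csSup_mem hne hbdd

lemma pseudoInv_nonneg (y : ℝ) : 0 ≤ pseudoInv g y :=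
  Real.sSup_nonneg (fun x hx => hx.1.1)

lemma pseudoInv_bddAbove (y : ℝ) : BddAbove {x | x ∈ Icc (0:ℝ) 1 ∧ y ≤ g x} :=
  ⟨1, fun x hx => hx.1.2⟩

lemma pseudoInv_antitoneOn (hg : MemC g) : AntitoneOn (pseudoInv g) (Icc 0 1) := by
  intro y hy y' hy' hyy'
  have hne : ({x | x ∈ Icc (0:ℝ) 1 ∧ y' ≤ g x}).Nonempty :=
    ⟨0, ⟨⟨le_refl 0, zero_le_one⟩, by rw [hg.1.2.2.1]; exact hy'.2⟩⟩
  apply csSup_le_csSup (pseudoInv_bddAbove y) hne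
  intro x hx
  exact ⟨hx.1, le_trans hyy' hx.2⟩

lemma memC_surj (hg : MemC g) : ∀ y ∈ Icc (0:ℝ) 1, ∃ t ∈ Icc (0:ℝ) 1, g t = y := by
  intro y hy
  have h := intermediate_value_Icc' (zero_le_one) hg.2.1
  rw [hg.2.2, hg.1.2.2.1] at h
  obtain ⟨t, ht, hgt⟩ := h hy
  exact ⟨t, ht, hgt⟩

lemma inv_props (hg : MemC g) (hsa : StrictAntiOn g (Icc 0 1)) :
    ∀ y ∈ Icc (0:ℝ) 1,
      pseudoInv g y ∈ Icc (0:ℝ) 1 ∧ g (pseudoInv g y) = y ∧ pseudoInv g (g y) = y := by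
  have key : ∀ y ∈ Icc (0:ℝ) 1, pseudoInv g y ∈ Icc (0:ℝ) 1 ∧ g (pseudoInv g y) = y := by
    intro y hy
    obtain ⟨hmem, hge⟩ := pseudoInv_mem_aux hg hy
    obtain ⟨t, ht, hgt⟩ := memC_surj hg y hy
    have htle : t ≤ pseudoInv g y := le_csSup (pseudoInv_bddAbove y) ⟨ht, hgt.ge⟩
    have heq : pseudoInv g y = t := by
      by_contra hne
      have hlt : t < pseudoInv g y := lt_of_le_of_ne htle (Ne.symm hne)
      have h2 := hsa ht hmem hlt
      rw [hgt] at h2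
      exact absurd hge (not_le.mpr h2)
    exact ⟨hmem, by rw [heq, hgt]⟩
  intro y hy
  refine ⟨(key y hy).1, (key y hy).2, ?_⟩
  have hgy : g y ∈ Icc (0:ℝ) 1 := hg.1.1 y hy
  exact hsa.injOn (key (g y) hgy).1 hy (key (g y) hgy).2

lemma pseudoInv_strictAntiOn (hg : MemC g) (hsa : StrictAntiOn g (Icc 0 1)) :
    StrictAntiOn (pseudoInv g) (Icc 0 1) := by
  intro y hy y' hy' hlt
  obtain ⟨hm, hgp, -⟩ := inv_props hg hsa y hy
  obtain ⟨hm', hgp', -⟩ := inv_props hg hsa y' hy'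
  by_contra h
  push_neg at h
  have h2 := hg.1.2.1 hm hm' h
  rw [hgp, hgp'] at h2
  exact absurd hlt (not_lt.mpr h2)

lemma pseudoInv_continuousOn (hg : MemC g) (hsa : StrictAntiOn g (Icc 0 1)) :
    ContinuousOn (pseudoInv g) (Icc 0 1) := by
  have hmaps : ∀ x : Icc (0:ℝ) 1, g x ∈ Icc (0:ℝ) 1 := fun x => hg.1.1 x x.2
  set G : Icc (0:ℝ) 1 → Icc (0:ℝ) 1 := fun x => ⟨g x, hmaps x⟩ with hG
  have hGc : Continuous G :=
    Continuous.subtype_mk (continuousOn_iff_continuous_restrict.mp hg.2.1) _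
  have hbij : Function.Bijective G := by
    constructor
    · intro a b hab
      exact Subtype.ext (hsa.injOn a.2 b.2 (congrArg Subtype.val hab))
    · intro y
      obtain ⟨hm, hgp, -⟩ := inv_props hg hsa y y.2
      exact ⟨⟨pseudoInv g y, hm⟩, Subtype.ext hgp⟩
  set E := Equiv.ofBijective G hbij with hE
  have hEc : Continuous (E : Icc (0:ℝ) 1 → Icc (0:ℝ) 1) := hGc
  set H := Continuous.homeoOfEquivCompactToT2 (f := E) hEc with hH
  have hrestrict : (Icc (0:ℝ) 1).restrict (pseudoInv g) =
      fun y : Icc (0:ℝ) 1 => ((H.symm y : Icc (0:ℝ) 1) : ℝ) := by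
    funext y
    obtain ⟨hm, hgp, -⟩ := inv_props hg hsa y y.2
    have h1 : H ⟨pseudoInv g y, hm⟩ = y := Subtype.ext hgp
    have h2 : H.symm y = ⟨pseudoInv g y, hm⟩ := H.symm_apply_eq.mpr h1.symm
    simp [h2, Set.restrict]
  rw [continuousOn_iff_continuous_restrict]
  change Continuous ((Icc (0:ℝ) 1).restrict (pseudoInv g))
  rw [hrestrict]
  exact continuous_subtype_val.comp H.symm.continuous

lemma icc_mem_nhdsWithin_Ioi {x : ℝ} (hx0 : 0 ≤ x) (hx1 : x < 1) :
    Icc (0:ℝ) 1 ∈ 𝓝[Set.Ioi x] x := by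
  apply Filter.mem_of_superset
    (Filter.inter_mem self_mem_nhdsWithin (mem_nhdsWithin_of_mem_nhds (Iic_mem_nhds hx1)))
  rintro y ⟨hy1, hy2⟩
  exact ⟨le_of_lt (lt_of_le_of_lt hx0 hy1), hy2⟩

lemma icc_mem_nhdsWithin_Iic : Icc (0:ℝ) 1 ∈ 𝓝[Set.Iic 1] (1:ℝ) := by
  apply Filter.mem_of_superset
    (Filter.inter_mem self_mem_nhdsWithin (mem_nhdsWithin_of_mem_nhds (Ici_mem_nhds zero_lt_one)))
  rintro y ⟨hy1, hy2⟩
  exact ⟨hy2, hy1⟩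

lemma hasDerivWithinAt_primitive {q : ℝ → ℝ} (hq : ContinuousOn q (Icc 0 1)) {x : ℝ}
    (hx : x ∈ Icc (0:ℝ) 1) :
    HasDerivWithinAt (fun u => ∫ t in (0:ℝ)..u, q t) (q x) (Icc 0 1) x := by
  have hmeasIcc : AEStronglyMeasurable q (volume.restrict (Icc (0:ℝ) 1)) :=
    hq.aestronglyMeasurable measurableSet_Icc
  have hint : IntervalIntegrable q volume 0 x := by
    apply ContinuousOn.intervalIntegrable
    apply hq.mono
    rw [uIcc_of_le hx.1]
    exact Icc_subset_Icc le_rfl hx.2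
  rcases eq_or_lt_of_le hx.2 with h1 | h1
  · -- x = 1
    subst h1
    have hmeas : StronglyMeasurableAtFilter q (𝓝[Set.Iic (1:ℝ)] 1) volume :=
      ⟨Icc 0 1, icc_mem_nhdsWithin_Iic, hmeasIcc⟩
    have hcw : ContinuousWithinAt q (Set.Iic 1) 1 :=
      (hq 1 hx).mono_of_mem_nhdsWithin icc_mem_nhdsWithin_Iic
    have h := intervalIntegral.integral_hasDerivWithinAt_right
      (s := Set.Iic (1:ℝ)) (t := Set.Iic (1:ℝ)) hint hmeas hcw
    exact h.mono (fun y hy => hy.2)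
  rcases eq_or_lt_of_le hx.1 with h0 | h0
  · -- x = 0
    subst h0
    have hmem : Icc (0:ℝ) 1 ∈ 𝓝[Set.Ioi (0:ℝ)] 0 := icc_mem_nhdsWithin_Ioi le_rfl h1
    have hmeas : StronglyMeasurableAtFilter q (𝓝[Set.Ioi (0:ℝ)] 0) volume :=
      ⟨Icc 0 1, hmem, hmeasIcc⟩
    have hcw : ContinuousWithinAt q (Set.Ioi 0) 0 :=
      (hq 0 hx).mono_of_mem_nhdsWithin hmem
    have h := intervalIntegral.integral_hasDerivWithinAt_right
      (s := Set.Ici (0:ℝ)) (t := Set.Ioi (0:ℝ)) hint hmeas hcw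
    exact h.mono (fun y hy => hy.1)
  · -- interior
    have hmem : Icc (0:ℝ) 1 ∈ 𝓝 x := Icc_mem_nhds h0 h1
    have hmeas : StronglyMeasurableAtFilter q (𝓝 x) volume := ⟨Icc 0 1, hmem, hmeasIcc⟩
    exact (intervalIntegral.integral_hasDerivAt_right hint hmeas
      (hq.continuousAt hmem)).hasDerivWithinAt

lemma hasDerivWithinAt_Ioi_of_Icc {f : ℝ → ℝ} {d x : ℝ} (hx0 : 0 ≤ x) (hx1 : x < 1)
    (h : HasDerivWithinAt f d (Icc 0 1) x) : HasDerivWithinAt f d (Set.Ioi x) x :=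
  h.mono_of_mem_nhdsWithin (icc_mem_nhdsWithin_Ioi hx0 hx1)

lemma ftc_eval {f f' : ℝ → ℝ} (hf : ∀ t ∈ Icc (0:ℝ) 1, HasDerivWithinAt f (f' t) (Icc 0 1) t)
    (hf'c : ContinuousOn f' (Icc 0 1)) {a b : ℝ} (ha : a ∈ Icc (0:ℝ) 1) (hb : b ∈ Icc (0:ℝ) 1)
    (hab : a ≤ b) : ∫ t in a..b, f' t = f b - f a := by
  have hsub : Icc a b ⊆ Icc (0:ℝ) 1 := Icc_subset_Icc ha.1 hb.2
  apply intervalIntegral.integral_eq_sub_of_hasDeriv_right_of_le hab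
  · intro t ht
    exact ((hf t (hsub ht)).continuousWithinAt).mono hsub
  · intro t ht
    exact hasDerivWithinAt_Ioi_of_Icc (le_trans ha.1 ht.1.le) (lt_of_lt_of_le ht.2 hb.2)
      (hf t (hsub (Ioo_subset_Icc_self ht)))
  · apply ContinuousOn.intervalIntegrable
    apply hf'c.mono
    rw [uIcc_of_le hab]
    exact hsub

lemma fix_strictAnti (hg : MemC g) (hfix : ∀ x ∈ Icc (0:ℝ) 1, Tmap g x = g x) :
    StrictAntiOn g (Icc 0 1) := by
  have hγ : 0 < ∫ t in (0:ℝ)..1, g t := hg.1.2.2.2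
  have hpanti : AntitoneOn (pseudoInv g) (Icc 0 1) := pseudoInv_antitoneOn hg
  have hint : ∀ a b : ℝ, a ∈ Icc (0:ℝ) 1 → b ∈ Icc (0:ℝ) 1 →
      IntervalIntegrable (pseudoInv g) volume a b := by
    intro a b ha hb
    exact (hpanti.mono (uIcc_subset_Icc ha hb)).intervalIntegrable
  intro a ha b hb hab
  rcases lt_or_ge (g b) (g a) with h | h
  · exact h
  exfalso
  have heq : g a = g b := le_antisymm h (hg.1.2.1 ha hb hab.le)
  have hA := hfix a ha
  have hB := hfix b hb
  simp only [Tmap] at hA hB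
  rw [div_eq_iff hγ.ne'] at hA hB
  have hone : (1:ℝ) ∈ Icc (0:ℝ) 1 := ⟨zero_le_one, le_refl 1⟩
  have hsplit : (∫ y in a..b, pseudoInv g y) + ∫ y in b..(1:ℝ), pseudoInv g y
      = ∫ y in a..(1:ℝ), pseudoInv g y :=
    intervalIntegral.integral_add_adjacent_intervals (hint a b ha hb) (hint b 1 hb hone)
  have hab2 : ∫ y in a..b, pseudoInv g y = 0 := by
    rw [hA, hB, heq] at *
    linarith [hsplit]
  set m := (a + b) / 2 with hm
  have ham : a < m := by simp only [hm]; linarith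
  have hmb : m < b := by simp only [hm]; linarith
  have hm1 : m < 1 := lt_of_lt_of_le hmb hb.2
  have hmIcc : m ∈ Icc (0:ℝ) 1 := ⟨le_trans ha.1 ham.le, hm1.le⟩
  -- find t > 0 with m < g t
  have hc0 : ContinuousWithinAt g (Icc 0 1) 0 := hg.2.1 0 ⟨le_refl 0, zero_le_one⟩
  have hev : g ⁻¹' (Set.Ioi m) ∈ 𝓝[Icc (0:ℝ) 1] 0 :=
    hc0 (Ioi_mem_nhds (by rw [hg.1.2.2.1]; exact hm1))
  have hne : (𝓝[Set.Ioc (0:ℝ) 1] 0).NeBot := by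
    apply mem_closure_iff_nhdsWithin_neBot.mp
    rw [closure_Ioc (one_ne_zero : (1:ℝ) ≠ 0).symm]
    exact ⟨le_refl 0, zero_le_one⟩
  have hev' : g ⁻¹' (Set.Ioi m) ∈ 𝓝[Set.Ioc (0:ℝ) 1] 0 :=
    nhdsWithin_mono 0 Ioc_subset_Icc_self hev
  obtain ⟨t, htm, ht⟩ := Filter.nonempty_of_mem (Filter.inter_mem hev' self_mem_nhdsWithin)
  have hpm : t ≤ pseudoInv g m :=
    le_csSup (pseudoInv_bddAbove m) ⟨⟨ht.1.le, ht.2⟩, htm.le⟩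
  have hpmpos : 0 < pseudoInv g m := lt_of_lt_of_le ht.1 hpm
  have h1 : ∫ _ in a..m, pseudoInv g m ≤ ∫ y in a..m, pseudoInv g y := by
    apply intervalIntegral.integral_mono_on ham.le intervalIntegrable_const (hint a m ha hmIcc)
    intro y hy
    exact hpanti ⟨le_trans ha.1 hy.1, le_trans hy.2 hm1.le⟩ hmIcc hy.2
  rw [intervalIntegral.integral_const, smul_eq_mul] at h1
  have h2 : 0 ≤ ∫ y in m..b, pseudoInv g y :=
    intervalIntegral.integral_nonneg hmb.le (fun y _ => pseudoInv_nonneg y)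
  have hsplit2 : (∫ y in a..m, pseudoInv g y) + ∫ y in m..b, pseudoInv g y
      = ∫ y in a..b, pseudoInv g y :=
    intervalIntegral.integral_add_adjacent_intervals (hint a m ha hmIcc) (hint m b hmIcc hb)
  have hpos : 0 < (m - a) * pseudoInv g m := mul_pos (by linarith) hpmpos
  linarith

lemma master (hg : MemC g) (hfix : ∀ x ∈ Icc (0:ℝ) 1, Tmap g x = g x) :
    StrictAntiOn g (Icc 0 1) ∧
    (∀ y ∈ Icc (0:ℝ) 1,
      pseudoInv g y ∈ Icc (0:ℝ) 1 ∧ g (pseudoInv g y) = y ∧ pseudoInv g (g y) = y) ∧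
    ContinuousOn (pseudoInv g) (Icc 0 1) ∧
    StrictAntiOn (pseudoInv g) (Icc 0 1) ∧
    ∀ x ∈ Icc (0:ℝ) 1,
      HasDerivWithinAt g (-(pseudoInv g x) / (∫ t in (0:ℝ)..1, g t)) (Icc 0 1) x := by
  have hsa := fix_strictAnti hg hfix
  have hpc := pseudoInv_continuousOn hg hsa
  refine ⟨hsa, inv_props hg hsa, hpc, pseudoInv_strictAntiOn hg hsa, ?_⟩
  intro x hx
  set γ := ∫ t in (0:ℝ)..1, g t with hγdef
  have hγ : 0 < γ := hg.1.2.2.2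
  have hintc : ∀ a b : ℝ, a ∈ Icc (0:ℝ) 1 → b ∈ Icc (0:ℝ) 1 →
      IntervalIntegrable (pseudoInv g) volume a b := by
    intro a b ha hb
    exact (hpc.mono (uIcc_subset_Icc ha hb)).intervalIntegrable
  have h1 := hasDerivWithinAt_primitive hpc hx
  have h2 : HasDerivWithinAt
      (fun u => ((∫ t in (0:ℝ)..1, pseudoInv g t) - ∫ t in (0:ℝ)..u, pseudoInv g t) / γ)
      (-(pseudoInv g x) / γ) (Icc 0 1) x := by
    have h3 := ((hasDerivWithinAt_const x (Icc (0:ℝ) 1)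
      (∫ t in (0:ℝ)..1, pseudoInv g t)).sub h1).div_const γ
    simpa using h3
  apply h2.congr
  · intro y hy
    have hT := hfix y hy
    simp only [Tmap] at hT
    have hone : (1:ℝ) ∈ Icc (0:ℝ) 1 := ⟨zero_le_one, le_refl 1⟩
    have hsplit : (∫ t in (0:ℝ)..y, pseudoInv g t) + ∫ t in y..(1:ℝ), pseudoInv g t
        = ∫ t in (0:ℝ)..1, pseudoInv g t :=
      intervalIntegral.integral_add_adjacent_intervals (hintc 0 y ⟨le_refl 0, zero_le_one⟩ hy)
        (hintc y 1 hy hone)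
    rw [← hT]
    congr 1
    linarith
  · have hT := hfix x hx
    simp only [Tmap] at hT
    have hone : (1:ℝ) ∈ Icc (0:ℝ) 1 := ⟨zero_le_one, le_refl 1⟩
    have hsplit : (∫ t in (0:ℝ)..x, pseudoInv g t) + ∫ t in x..(1:ℝ), pseudoInv g t
        = ∫ t in (0:ℝ)..1, pseudoInv g t :=
      intervalIntegral.integral_add_adjacent_intervals (hintc 0 x ⟨le_refl 0, zero_le_one⟩ hx)
        (hintc x 1 hx hone)
    rw [← hT]
    congr 1
    linarith

lemma pseudoInv_le_one (y : ℝ) : pseudoInv g y ≤ 1 :=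
  Real.sSup_le (fun x hx => hx.1.2) zero_le_one

lemma integral_p_eq (hg : MemC g) {γ : ℝ} (hγ : 0 < γ)
    (hpc : ContinuousOn (pseudoInv g) (Icc 0 1))
    (hd : ∀ t ∈ Icc (0:ℝ) 1, HasDerivWithinAt g (-(pseudoInv g t) / γ) (Icc 0 1) t) :
    ∀ x ∈ Icc (0:ℝ) 1, ∫ t in x..1, pseudoInv g t = γ * g x := by
  intro x hx
  have hone : (1:ℝ) ∈ Icc (0:ℝ) 1 := ⟨zero_le_one, le_refl 1⟩
  have hcont' : ContinuousOn (fun t => -(pseudoInv g t) / γ) (Icc 0 1) :=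
    hpc.neg.div_const γ
  have h := ftc_eval hd hcont' hx hone hx.2
  rw [hg.2.2] at h
  have h2 : ∫ t in x..1, -(pseudoInv g t) / γ = -(∫ t in x..1, pseudoInv g t) / γ := by
    rw [intervalIntegral.integral_div, intervalIntegral.integral_neg]
  rw [h2, div_eq_iff hγ.ne'] at h
  linear_combination -h

lemma gamma_eq (hg : MemC g) (hsa : StrictAntiOn g (Icc 0 1)) {γ : ℝ} (hγ : 0 < γ)
    (hpc : ContinuousOn (pseudoInv g) (Icc 0 1))
    (hd : ∀ t ∈ Icc (0:ℝ) 1, HasDerivWithinAt g (-(pseudoInv g t) / γ) (Icc 0 1) t) :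
    γ = ∫ t in (0:ℝ)..1, g t := by
  have hzero : (0:ℝ) ∈ Icc (0:ℝ) 1 := ⟨le_refl 0, zero_le_one⟩
  have hIp : ∫ t in (0:ℝ)..1, pseudoInv g t = γ := by
    have h := integral_p_eq hg hγ hpc hd 0 hzero
    rw [hg.1.2.2.1] at h
    simpa using h
  have hinv := inv_props hg hsa
  have huIcc : Set.uIcc (1:ℝ) 0 = Icc (0:ℝ) 1 := by
    rw [Set.uIcc_of_ge zero_le_one]
  have himg : g '' (Set.uIcc (1:ℝ) 0) ⊆ Icc (0:ℝ) 1 := by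
    rw [huIcc]
    rintro y ⟨t, ht, rfl⟩
    exact hg.1.1 t ht
  have hsubst := intervalIntegral.integral_comp_smul_deriv'' (a := (1:ℝ)) (b := 0)
      (f := g) (f' := fun t => -(pseudoInv g t) / γ) (g := pseudoInv g)
      (by rw [huIcc]; exact hg.2.1)
      (by intro t ht
          have ht' : t ∈ Set.Ioo (0:ℝ) 1 := by simpa using ht
          exact hasDerivWithinAt_Ioi_of_Icc ht'.1.le ht'.2 (hd t (Ioo_subset_Icc_self ht')))
      (by rw [huIcc]; exact hpc.neg.div_const γ)
      (hpc.mono himg)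
  rw [hg.2.2, hg.1.2.2.1] at hsubst
  have hcongr : (∫ x in (1:ℝ)..0, (-(pseudoInv g x) / γ) • (pseudoInv g ∘ g) x)
      = ∫ x in (1:ℝ)..0, x * (-(pseudoInv g x) / γ) := by
    apply intervalIntegral.integral_congr
    intro t ht
    rw [huIcc] at ht
    simp only [Function.comp_apply, smul_eq_mul, (hinv t ht).2.2]
    ring
  have hone : (1:ℝ) ∈ Icc (0:ℝ) 1 := ⟨zero_le_one, le_refl 1⟩
  have hparts := intervalIntegral.integral_mul_deriv_eq_deriv_mul_of_hasDerivWithinAt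
      (a := (0:ℝ)) (b := 1) (u := fun x => x) (u' := fun _ => (1:ℝ)) (v := g)
      (v' := fun x => -(pseudoInv g x) / γ)
      (by intro t ht
          rw [Set.uIcc_of_le zero_le_one] at ht
          exact hasDerivWithinAt_id t _)
      (by intro t ht
          rw [Set.uIcc_of_le zero_le_one] at ht ⊢
          exact hd t ht)
      intervalIntegrable_const
      (by apply ContinuousOn.intervalIntegrable
          rw [Set.uIcc_of_le zero_le_one]
          exact hpc.neg.div_const γ)
  calc γ = ∫ u in (0:ℝ)..1, pseudoInv g u := hIp.symm
    _ = ∫ x in (1:ℝ)..0, (-(pseudoInv g x) / γ) • (pseudoInv g ∘ g) x := hsubst.symm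
    _ = ∫ x in (1:ℝ)..0, x * (-(pseudoInv g x) / γ) := hcongr
    _ = -(∫ x in (0:ℝ)..1, x * (-(pseudoInv g x) / γ)) := intervalIntegral.integral_symm 0 1
    _ = -((fun x => x) 1 * g 1 - (fun x => x) 0 * g 0 - ∫ x in (0:ℝ)..1, (1:ℝ) * g x) := by
        rw [hparts]
    _ = ∫ t in (0:ℝ)..1, g t := by
        rw [hg.2.2]
        simp

lemma bwd (hg : MemC g) (hsa : StrictAntiOn g (Icc 0 1)) {γ : ℝ} (hγ : 0 < γ) {g' : ℝ → ℝ}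
    (hd : ∀ x ∈ Icc (0:ℝ) 1, HasDerivWithinAt g (g' x) (Icc 0 1) x)
    {gi : ℝ → ℝ}
    (hgi : ∀ x ∈ Icc (0:ℝ) 1, gi x ∈ Icc (0:ℝ) 1 ∧ g (gi x) = x ∧ gi (g x) = x)
    (hode : ∀ x ∈ Icc (0:ℝ) 1, -γ * g' x = gi x) :
    ∀ x ∈ Icc (0:ℝ) 1, Tmap g x = g x := by
  have hinv := inv_props hg hsa
  have hpc := pseudoInv_continuousOn hg hsa
  have hpgi : ∀ y ∈ Icc (0:ℝ) 1, pseudoInv g y = gi y := by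
    intro y hy
    apply hsa.injOn (hinv y hy).1 (hgi y hy).1
    rw [(hinv y hy).2.1, (hgi y hy).2.1]
  have hd' : ∀ t ∈ Icc (0:ℝ) 1, HasDerivWithinAt g (-(pseudoInv g t) / γ) (Icc 0 1) t := by
    intro t ht
    have h := hode t ht
    rw [← hpgi t ht] at h
    have he : g' t = -(pseudoInv g t) / γ := by
      rw [eq_div_iff hγ.ne']
      linear_combination -h
    rw [← he]
    exact hd t ht
  have hIeq := integral_p_eq hg hγ hpc hd'
  have hγeq := gamma_eq hg hsa hγ hpc hd'
  intro x hx
  simp only [Tmap]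
  rw [hIeq x hx, ← hγeq, mul_comm, mul_div_assoc, div_self hγ.ne', mul_one]

lemma fix_convex (hg : MemC g) (hpanti : AntitoneOn (pseudoInv g) (Icc 0 1))
    (hd : ∀ x ∈ Icc (0:ℝ) 1,
      HasDerivWithinAt g (-(pseudoInv g x) / (∫ t in (0:ℝ)..1, g t)) (Icc 0 1) x) :
    ConvexOn ℝ (Icc 0 1) g := by
  have hγ : 0 < ∫ t in (0:ℝ)..1, g t := hg.1.2.2.2
  apply MonotoneOn.convexOn_of_deriv (convex_Icc 0 1) hg.2.1
  · rw [interior_Icc]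
    intro x hx
    exact (((hd x (Ioo_subset_Icc_self hx)).hasDerivAt
      (Icc_mem_nhds hx.1 hx.2)).differentiableAt).differentiableWithinAt
  · rw [interior_Icc]
    intro x hx y hy hxy
    rw [((hd x (Ioo_subset_Icc_self hx)).hasDerivAt (Icc_mem_nhds hx.1 hx.2)).deriv,
        ((hd y (Ioo_subset_Icc_self hy)).hasDerivAt (Icc_mem_nhds hy.1 hy.2)).deriv]
    have h := hpanti (Ioo_subset_Icc_self hx) (Ioo_subset_Icc_self hy) hxy
    exact (div_le_div_iff_of_pos_right hγ).mpr (neg_le_neg h)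

lemma fix_stride (hg : MemC g) (hsa : StrictAntiOn g (Icc 0 1))
    (hpc : ContinuousOn (pseudoInv g) (Icc 0 1))
    (hd : ∀ x ∈ Icc (0:ℝ) 1,
      HasDerivWithinAt g (-(pseudoInv g x) / (∫ t in (0:ℝ)..1, g t)) (Icc 0 1) x) :
    (∫ t in (0:ℝ)..1, g t) = stride g := by
  set γ := ∫ t in (0:ℝ)..1, g t with hγdef
  have hγ : 0 < γ := hg.1.2.2.2
  have hinv := inv_props hg hsa
  have hzero : (0:ℝ) ∈ Icc (0:ℝ) 1 := ⟨le_refl 0, zero_le_one⟩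
  have hone : (1:ℝ) ∈ Icc (0:ℝ) 1 := ⟨zero_le_one, le_refl 1⟩
  have hp0 : pseudoInv g 0 = 1 := by
    apply hsa.injOn (hinv 0 hzero).1 hone
    rw [(hinv 0 hzero).2.1, hg.2.2]
  have hup : ∀ α ∈ {α : ℝ | 0 ≤ α ∧ ∀ x ∈ Icc (0:ℝ) 1, α - x ≤ α * g x}, α ≤ γ := by
    rintro α ⟨hα0, hα⟩
    have hder0 : HasDerivWithinAt g (-(1:ℝ) / γ) (Set.Ioc 0 1) 0 := by
      have h := hd 0 hzero
      rw [hp0] at h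
      exact h.mono Ioc_subset_Icc_self
    have hslope := (hasDerivWithinAt_iff_tendsto_slope'
      (by simp : (0:ℝ) ∉ Set.Ioc (0:ℝ) 1)).mp hder0
    have hne : (𝓝[Set.Ioc (0:ℝ) 1] (0:ℝ)).NeBot := by
      apply mem_closure_iff_nhdsWithin_neBot.mp
      rw [closure_Ioc (one_ne_zero : (1:ℝ) ≠ 0).symm]
      exact hzero
    have hten : Filter.Tendsto (fun x => α * -(slope g 0 x)) (𝓝[Set.Ioc (0:ℝ) 1] 0)
        (𝓝 (α * -(-(1:ℝ) / γ))) := (hslope.neg).const_mul α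
    have hle : ∀ᶠ x in 𝓝[Set.Ioc (0:ℝ) 1] (0:ℝ), α * -(slope g 0 x) ≤ 1 := by
      filter_upwards [self_mem_nhdsWithin] with x hx
      have hxI : x ∈ Icc (0:ℝ) 1 := ⟨hx.1.le, hx.2⟩
      have h := hα x hxI
      have hx0 : 0 < x := hx.1
      have hform : α * -(slope g 0 x) = α * (1 - g x) / x := by
        rw [slope_def_field, hg.1.2.2.1]
        ring
      rw [hform, div_le_one hx0]
      nlinarith [h]
    have hlim := le_of_tendsto hten hle
    have h2 : α * -(-(1:ℝ) / γ) = α / γ := by ring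
    rw [h2] at hlim
    exact (div_le_one hγ).mp hlim
  have hub : ∀ x ∈ Icc (0:ℝ) 1, γ - x ≤ γ * g x := by
    intro x hx
    have hcont' : ContinuousOn (fun t => -(pseudoInv g t) / γ) (Icc 0 1) :=
      hpc.neg.div_const γ
    have hftc := ftc_eval hd hcont' hzero hx hx.1
    rw [hg.1.2.2.1] at hftc
    have hmono : ∫ _ in (0:ℝ)..x, (-(1:ℝ) / γ) ≤ ∫ t in (0:ℝ)..x, -(pseudoInv g t) / γ := by
      apply intervalIntegral.integral_mono_on hx.1 intervalIntegrable_const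
      · apply ContinuousOn.intervalIntegrable
        apply hcont'.mono
        rw [uIcc_of_le hx.1]
        exact Icc_subset_Icc le_rfl hx.2
      · intro t ht
        have h1 := pseudoInv_le_one (g := g) t
        exact (div_le_div_iff_of_pos_right hγ).mpr (neg_le_neg h1)
    rw [intervalIntegral.integral_const, smul_eq_mul, sub_zero, hftc] at hmono
    have h5 : γ * (x * (-(1:ℝ) / γ)) = -x := by
      field_simp
    have h6 := mul_le_mul_of_nonneg_left hmono hγ.le
    rw [h5] at h6
    have h7 : γ * (g x - 1) = γ * g x - γ := by ring
    rw [h7] at h6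
    linarith
  have hmem : γ ∈ {α : ℝ | 0 ≤ α ∧ ∀ x ∈ Icc (0:ℝ) 1, α - x ≤ α * g x} := ⟨hγ.le, hub⟩
  have hbdd : BddAbove {α : ℝ | 0 ≤ α ∧ ∀ x ∈ Icc (0:ℝ) 1, α - x ≤ α * g x} := ⟨γ, hup⟩
  unfold stride
  exact le_antisymm (le_csSup hbdd hmem) (csSup_le ⟨γ, hmem⟩ hup)

end Stmt4Aux

/-- `g ∈ 𝒞` is a fixed point of `T` iff `g` is strictly decreasing,
differentiable and solves `-γ g' = g⁻¹` for some `γ > 0`; in that case `g` is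
convex and continuously differentiable and `γ = ∫₀¹ g = σ g`. -/
theorem stmt4 (g : ℝ → ℝ) (hg : MemC g) :
    ((∀ x ∈ Icc (0:ℝ) 1, Tmap g x = g x) ↔
      (StrictAntiOn g (Icc 0 1) ∧
        ∃ γ : ℝ, 0 < γ ∧ ∃ g' : ℝ → ℝ,
          (∀ x ∈ Icc (0:ℝ) 1, HasDerivWithinAt g (g' x) (Icc 0 1) x) ∧
          ∃ gi : ℝ → ℝ,
            (∀ x ∈ Icc (0:ℝ) 1, gi x ∈ Icc (0:ℝ) 1 ∧ g (gi x) = x ∧ gi (g x) = x) ∧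
            ∀ x ∈ Icc (0:ℝ) 1, -γ * g' x = gi x)) ∧
    ((∀ x ∈ Icc (0:ℝ) 1, Tmap g x = g x) →
      ConvexOn ℝ (Icc 0 1) g ∧
      (∃ g' : ℝ → ℝ, ContinuousOn g' (Icc 0 1) ∧
        (∀ x ∈ Icc (0:ℝ) 1, HasDerivWithinAt g (g' x) (Icc 0 1) x) ∧
        ∃ gi : ℝ → ℝ,
          (∀ x ∈ Icc (0:ℝ) 1, gi x ∈ Icc (0:ℝ) 1 ∧ g (gi x) = x ∧ gi (g x) = x) ∧
          ∀ x ∈ Icc (0:ℝ) 1, -(∫ t in (0:ℝ)..1, g t) * g' x = gi x) ∧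
      (∫ t in (0:ℝ)..1, g t) = stride g) := by
  have hγ : 0 < ∫ t in (0:ℝ)..1, g t := hg.1.2.2.2
  have hγ0 : (∫ t in (0:ℝ)..1, g t) ≠ 0 := hγ.ne'
  constructor
  · constructor
    · intro hfix
      obtain ⟨hsa, hinv, hpc, hpsa, hd⟩ := master hg hfix
      refine ⟨hsa, ∫ t in (0:ℝ)..1, g t, hγ,
        fun x => -(pseudoInv g x) / (∫ t in (0:ℝ)..1, g t), hd, pseudoInv g, hinv, ?_⟩
      intro x hx
      field_simp
    · rintro ⟨hsa, γ, hγ', g', hd, gi, hgi, hode⟩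
      exact bwd hg hsa hγ' hd hgi hode
  · intro hfix
    obtain ⟨hsa, hinv, hpc, hpsa, hd⟩ := master hg hfix
    refine ⟨fix_convex hg hpsa.antitoneOn hd,
      ⟨fun x => -(pseudoInv g x) / (∫ t in (0:ℝ)..1, g t),
        (hpc.neg).div_const _, hd, pseudoInv g, hinv, ?_⟩,
      fix_stride hg hsa hpc hd⟩
    intro x hx
    field_simp
end
end

section
/- For all f, g ∈ 𝒦, the sup-metric and the L¹-metric are equivalent in the sense that ∫₀¹ |f − g| ≤ sup_{x ∈ [0,1]} |f(x) − g(x)| ≤ 5·√(∫₀¹ |f − g|). -/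
open Set MeasureTheory Filter intervalIntegral

noncomputable section

private lemma lin_lb {g : ℝ → ℝ} (hg : MemK g) : ∀ x ∈ Icc (0:ℝ) 1, 1 - 5*x ≤ g x := by
  intro x hx
  by_contra hcon
  push_neg at hcon
  have hx0 : 0 ≤ x := hx.1
  have hgx : 5*x < 1 - g x := by linarith
  have hpos : 0 < 1 - g x := by nlinarith
  have ht : x / (1 - g x) < 1/5 := by
    rw [div_lt_iff₀ hpos]; linarith
  have hne : {α : ℝ | 0 ≤ α ∧ ∀ x ∈ Icc (0:ℝ) 1, α - x ≤ α * g x}.Nonempty := by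
    refine ⟨0, le_refl 0, fun y hy => ?_⟩
    simp only [zero_sub, zero_mul]
    linarith [hy.1]
  have hlt : x / (1 - g x) < stride g := lt_of_lt_of_le ht hg.2.1
  obtain ⟨α, hαmem, hαgt⟩ := exists_lt_of_lt_csSup hne hlt
  have hkey := hαmem.2 x hx
  have : α ≤ x / (1 - g x) := by
    rw [le_div_iff₀ hpos]; nlinarith
  linarith

private lemma lip_lem {f : ℝ → ℝ} (hf : MemK f) :
    ∀ x ∈ Icc (0:ℝ) 1, ∀ y ∈ Icc (0:ℝ) 1, x ≤ y → f x - f y ≤ 5*(y-x) := by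
  intro x hx y hy hxy
  rcases eq_or_lt_of_le hxy with rfl | hlt
  · simp
  rcases eq_or_lt_of_le hx.1 with hx0 | hx0
  · have := lin_lb hf y hy
    have hf0 : f 0 = 1 := hf.1.1.1.2.2.1
    rw [← hx0, hf0]; linarith
  · have hconv := hf.1.2
    have hslope := hconv.slope_mono_adjacent (x := 0) (y := x) (z := y)
      (left_mem_Icc.2 zero_le_one) hy hx0 hlt
    have hf0 : f 0 = 1 := hf.1.1.1.2.2.1
    rw [hf0] at hslope
    have hlb := lin_lb hf x hx
    have h1 : (-5 : ℝ) ≤ (f x - 1) / (x - 0) := by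
      rw [le_div_iff₀ (by linarith : (0:ℝ) < x - 0)]
      linarith
    have h2 : (-5 : ℝ) ≤ (f y - f x) / (y - x) := le_trans h1 hslope
    rw [le_div_iff₀ (by linarith : (0:ℝ) < y - x)] at h2
    linarith

private lemma lin_int (c d a b : ℝ) :
    ∫ x in a..b, (c + d * x) = c*(b - a) + d*(b^2 - a^2)/2 := by
  rw [intervalIntegral.integral_add intervalIntegrable_const
    (intervalIntegrable_id.const_mul d), intervalIntegral.integral_const,
    intervalIntegral.integral_const_mul, integral_id, smul_eq_mul]
  ring

private lemma key_lem (h φ : ℝ → ℝ) (a b : ℝ) (h0 : 0 ≤ a) (hab : a ≤ b) (hb1 : b ≤ 1)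
    (hcont : ContinuousOn h (Icc 0 1)) (hnn : ∀ x ∈ Icc (0:ℝ) 1, 0 ≤ h x)
    (hφint : IntervalIntegrable φ volume a b)
    (hlow : ∀ x ∈ Icc a b, φ x ≤ h x) :
    (∫ x in a..b, φ x) ≤ ∫ x in (0:ℝ)..1, h x := by
  have hint : ∀ u v : ℝ, 0 ≤ u → u ≤ v → v ≤ 1 → IntervalIntegrable h volume u v := by
    intro u v hu huv hv
    apply (hcont.mono ?_).intervalIntegrable
    rw [uIcc_of_le huv]
    exact Icc_subset_Icc hu hv
  have e1 : (∫ x in (0:ℝ)..1, h x) = (∫ x in (0:ℝ)..a, h x) + (∫ x in a..(1:ℝ), h x) :=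
    (intervalIntegral.integral_add_adjacent_intervals (hint 0 a le_rfl h0 (le_trans hab hb1))
      (hint a 1 h0 (le_trans hab hb1) le_rfl)).symm
  have e2 : (∫ x in a..(1:ℝ), h x) = (∫ x in a..b, h x) + (∫ x in b..(1:ℝ), h x) :=
    (intervalIntegral.integral_add_adjacent_intervals (hint a b h0 hab hb1)
      (hint b 1 (le_trans h0 hab) hb1 le_rfl)).symm
  have p1 : 0 ≤ ∫ x in (0:ℝ)..a, h x :=
    intervalIntegral.integral_nonneg h0 (fun x hx => hnn x ⟨hx.1, le_trans hx.2 (le_trans hab hb1)⟩)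
  have p3 : 0 ≤ ∫ x in b..(1:ℝ), h x :=
    intervalIntegral.integral_nonneg hb1 (fun x hx => hnn x ⟨le_trans (le_trans h0 hab) hx.1, hx.2⟩)
  have p2 : (∫ x in a..b, φ x) ≤ ∫ x in a..b, h x :=
    intervalIntegral.integral_mono_on hab hφint (hint a b h0 hab hb1)
      (fun x hx => hlow x hx)
  linarith [e1, e2, p1, p3, p2]

/-- on `𝒦` the sup-metric and the `L¹`-metric are equivalent:
`∫₀¹ |f-g| ≤ sup_{[0,1]} |f-g| ≤ 5·√(∫₀¹ |f-g|)`. -/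
theorem stmt11 (f g : ℝ → ℝ) (hf : MemK f) (hg : MemK g) :
    (∫ x in (0:ℝ)..1, |f x - g x|) ≤ (⨆ x : Icc (0:ℝ) 1, |f x - g x|) ∧
    (⨆ x : Icc (0:ℝ) 1, |f x - g x|) ≤ 5 * Real.sqrt (∫ x in (0:ℝ)..1, |f x - g x|) := by
  -- basic facts
  have hfc : ContinuousOn f (Icc 0 1) := hf.1.1.2.1
  have hgc : ContinuousOn g (Icc 0 1) := hg.1.1.2.1
  have hfm : ∀ x ∈ Icc (0:ℝ) 1, f x ∈ Icc (0:ℝ) 1 := hf.1.1.1.1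
  have hgm : ∀ x ∈ Icc (0:ℝ) 1, g x ∈ Icc (0:ℝ) 1 := hg.1.1.1.1
  set h : ℝ → ℝ := fun x => |f x - g x| with hh
  have hcont : ContinuousOn h (Icc 0 1) := (hfc.sub hgc).abs
  have hnn : ∀ x ∈ Icc (0:ℝ) 1, 0 ≤ h x := fun x _ => abs_nonneg _
  have hub : ∀ x ∈ Icc (0:ℝ) 1, h x ≤ 1 := by
    intro x hx
    have h1 := hfm x hx; have h2 := hgm x hx
    rw [hh]; rw [abs_le]; constructor <;> [linarith [h1.1, h2.2]; linarith [h1.2, h2.1]]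
  -- maximum point
  obtain ⟨x₀, hx₀, hmax⟩ := (isCompact_Icc (a := (0:ℝ)) (b := 1)).exists_isMaxOn
    (nonempty_Icc.2 zero_le_one) hcont
  have hbdd : BddAbove (Set.range fun x : Icc (0:ℝ) 1 => h ↑x) := by
    refine ⟨h x₀, ?_⟩
    rintro y ⟨x, rfl⟩
    exact hmax x.2
  have hMeq : (⨆ x : Icc (0:ℝ) 1, |f ↑x - g ↑x|) = h x₀ := by
    apply le_antisymm
    · exact ciSup_le fun x => hmax x.2
    · exact le_ciSup hbdd (⟨x₀, hx₀⟩ : Icc (0:ℝ) 1)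
  set M : ℝ := h x₀ with hM
  have hM0 : 0 ≤ M := hnn x₀ hx₀
  have hM1 : M ≤ 1 := hub x₀ hx₀
  -- Lipschitz for h
  have hliph : ∀ x ∈ Icc (0:ℝ) 1, ∀ y ∈ Icc (0:ℝ) 1, x ≤ y → |h y - h x| ≤ 10*(y - x) := by
    intro x hx y hy hxy
    have hfl := lip_lem hf x hx y hy hxy
    have hgl := lip_lem hg x hx y hy hxy
    have hfanti : f y ≤ f x := hf.1.1.1.2.1 hx hy hxy
    have hganti : g y ≤ g x := hg.1.1.1.2.1 hx hy hxy
    have h1 : |h y - h x| ≤ |(f y - g y) - (f x - g x)| := abs_abs_sub_abs_le_abs_sub _ _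
    have h2 : |(f y - g y) - (f x - g x)| = |(f y - f x) - (g y - g x)| := by ring_nf
    calc |h y - h x| ≤ |(f y - f x) - (g y - g x)| := h2 ▸ h1
      _ ≤ |f y - f x| + |g y - g x| := abs_sub _ _
      _ ≤ 5*(y-x) + 5*(y-x) := by
          apply add_le_add
          · rw [abs_sub_comm, abs_of_nonneg (by linarith)]; exact hfl
          · rw [abs_sub_comm, abs_of_nonneg (by linarith)]; exact hgl
      _ = 10*(y-x) := by ring
  -- integrability of h
  have hhint : IntervalIntegrable h volume 0 1 := by
    apply ContinuousOn.intervalIntegrable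
    rwa [uIcc_of_le zero_le_one]
  -- Part 1
  have part1 : (∫ x in (0:ℝ)..1, h x) ≤ M := by
    have : (∫ x in (0:ℝ)..1, h x) ≤ ∫ _x in (0:ℝ)..1, M := by
      apply intervalIntegral.integral_mono_on zero_le_one hhint intervalIntegrable_const
      exact fun x hx => hmax hx
    simpa using this
  -- Part 2: M^2/20 ≤ ∫ h
  have hI0 : 0 ≤ ∫ x in (0:ℝ)..1, h x :=
    intervalIntegral.integral_nonneg zero_le_one hnn
  have part2 : M^2/20 ≤ ∫ x in (0:ℝ)..1, h x := by
    rcases le_or_gt x₀ (1/2) with hc | hc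
    · -- right interval [x₀, x₀ + M/10]
      have key := key_lem h (fun x => (M + 10*x₀) + (-10) * x) x₀ (x₀ + M/10) hx₀.1
        (by linarith) (by linarith) hcont hnn
        (intervalIntegrable_const.add (intervalIntegrable_id.const_mul _))
        ?_
      · rw [lin_int] at key
        calc M^2/20 = (M + 10*x₀)*((x₀ + M/10) - x₀) + (-10)*((x₀ + M/10)^2 - x₀^2)/2 := by
              ring
          _ ≤ _ := key
      · intro x hx
        have hxI : x ∈ Icc (0:ℝ) 1 := ⟨le_trans hx₀.1 hx.1, le_trans hx.2 (by linarith)⟩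
        have h2 := hliph x₀ hx₀ x hxI hx.1
        have h3 : h x₀ - h x ≤ |h x - h x₀| := by
          rw [abs_sub_comm]; exact le_abs_self _
        have h4 : h x₀ - h x ≤ 10*(x - x₀) := le_trans h3 h2
        linarith
    · -- left interval [x₀ - M/10, x₀]
      have key := key_lem h (fun x => (M - 10*x₀) + 10 * x) (x₀ - M/10) x₀
        (by linarith) (by linarith) hx₀.2 hcont hnn
        (intervalIntegrable_const.add (intervalIntegrable_id.const_mul _))
        ?_
      · rw [lin_int] at key
        calc M^2/20 = (M - 10*x₀)*(x₀ - (x₀ - M/10)) + 10*(x₀^2 - (x₀ - M/10)^2)/2 := by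
              ring
          _ ≤ _ := key
      · intro x hx
        have hxI : x ∈ Icc (0:ℝ) 1 := ⟨le_trans (by linarith) hx.1, le_trans hx.2 hx₀.2⟩
        have h2 := hliph x hxI x₀ hx₀ hx.2
        have h3 : h x₀ - h x ≤ 10*(x₀ - x) := le_trans (le_abs_self _) h2
        linarith
  -- Conclude
  rw [hMeq]
  refine ⟨part1, ?_⟩
  have hsq : M^2 ≤ 25 * ∫ x in (0:ℝ)..1, h x := by linarith
  calc M = Real.sqrt (M^2) := (Real.sqrt_sq hM0).symm
    _ ≤ Real.sqrt (25 * ∫ x in (0:ℝ)..1, h x) := Real.sqrt_le_sqrt hsq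
    _ = 5 * Real.sqrt (∫ x in (0:ℝ)..1, h x) := by
        rw [Real.sqrt_mul (by norm_num : (0:ℝ) ≤ 25), show (25:ℝ) = 5^2 by norm_num,
          Real.sqrt_sq (by norm_num : (0:ℝ) ≤ 5)]
end
end
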